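/- arXiv:1012.2724 — 3 statements merged into one kernel-verified Lean document; each statement's English description precedes it below -/
import Mathlib

section
/- Let R be a commutative ring, M an R-module, and d, e ≥ 0. The composite of the comultiplication Λ^{d+e}(M) → Λ^d(M) ⊗ Λ^e(M) (the (d,e)-component of the diagonal of the exterior bialgebra, given by a signed sum over (d,e)-shuffles) with the wedge multiplication Λ^d(M) ⊗ Λ^e(M) → Λ^{d+e}(M) equals binomial(d+e, d) times the identity of Λ^{d+e}(M). -/
open scoped TensorProduct

/-- The wedge multiplication `Λ^d(M) ⊗ Λ^e(M) → ExteriorAlgebra R M` (with image inside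
`Λ^{d+e}(M)`), induced by the product of the exterior algebra. -/
noncomputable def wedgeMul (R : Type*) [CommRing R] (M : Type*) [AddCommGroup M] [Module R M]
    (d e : ℕ) : (⋀[R]^d M) ⊗[R] (⋀[R]^e M) →ₗ[R] ExteriorAlgebra R M :=
  TensorProduct.lift ((LinearMap.mul R (ExteriorAlgebra R M)).compl₁₂
    (Submodule.subtype _) (Submodule.subtype _))

/-!
On a decomposable vector `v₁ ∧ ⋯ ∧ v_{d+e}`, the shuffle `σ` contributes
`sign σ • (v_{σ 1} ∧ ⋯ ∧ v_{σ (d+e)}) = (sign σ)² • (v₁ ∧ ⋯ ∧ v_{d+e})`, so every shuffle contributes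
the same vector and the composite is multiplication by the number of shuffles. A shuffle is
determined by the increasing map it restricts to on the first block, i.e. by a `d`-element subset
of `Fin (d + e)`, so there are `(d + e).choose d` of them.
-/

open Equiv Function Set

section Shuffles

variable {d e : ℕ}

def shuffles (d e : ℕ) : Finset (Perm (Fin (d + e))) :=
  Finset.univ.filter (fun σ : Perm (Fin (d + e)) =>
    (∀ i j : Fin d, i < j → σ (Fin.castAdd e i) < σ (Fin.castAdd e j)) ∧
    (∀ i j : Fin e, i < j → σ (Fin.natAdd d i) < σ (Fin.natAdd d j)))

lemma mem_shuffles {σ : Perm (Fin (d + e))} :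
    σ ∈ shuffles d e ↔ StrictMono (σ ∘ Fin.castAdd e) ∧ StrictMono (σ ∘ Fin.natAdd d) := by
  simp [shuffles, StrictMono]

lemma range_perm_comp_natAdd (σ : Perm (Fin (d + e))) :
    range (σ ∘ Fin.natAdd d) = (range (σ ∘ Fin.castAdd e))ᶜ := by
  ext x
  obtain ⟨y, rfl⟩ := σ.surjective x
  induction y using Fin.addCases <;> simp [σ.injective.eq_iff, Fin.ext_iff] <;> omega

lemma eq_of_mem_shuffles_of_comp_castAdd_eq {σ τ : Perm (Fin (d + e))}
    (hσ : σ ∈ shuffles d e) (hτ : τ ∈ shuffles d e)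
    (h : σ ∘ Fin.castAdd e = τ ∘ Fin.castAdd e) : σ = τ := by
  rw [mem_shuffles] at hσ hτ
  have hnatAdd : σ ∘ Fin.natAdd d = τ ∘ Fin.natAdd d :=
    (hσ.2.range_inj hτ.2).1 (by rw [range_perm_comp_natAdd, range_perm_comp_natAdd, h])
  ext i
  induction i using Fin.addCases with
  | left i => exact congrArg Fin.val (congrFun h i)
  | right i => exact congrArg Fin.val (congrFun hnatAdd i)

lemma card_compl_range_orderEmb (f : Fin d ↪o Fin (d + e)) : Fintype.card ↥(range f)ᶜ = e := by
  rw [Fintype.card_compl_set, card_range_of_injective f.injective]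
  simp

/-- The shuffle that is `f` on the first block and the increasing enumeration of the complement of
the range of `f` on the second. -/
noncomputable def shuffleOfOrderEmb (f : Fin d ↪o Fin (d + e)) : Perm (Fin (d + e)) :=
  finSumFinEquiv.symm.trans <|
    ((Equiv.ofInjective f f.injective).sumCongr
      (Fintype.orderIsoFinOfCardEq _ (card_compl_range_orderEmb f)).toEquiv).trans
    (Equiv.Set.sumCompl (range f))

@[simp] lemma shuffleOfOrderEmb_castAdd (f : Fin d ↪o Fin (d + e)) (i : Fin d) :
    shuffleOfOrderEmb f (Fin.castAdd e i) = f i := by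
  simp [shuffleOfOrderEmb]

lemma shuffleOfOrderEmb_natAdd (f : Fin d ↪o Fin (d + e)) (i : Fin e) :
    shuffleOfOrderEmb f (Fin.natAdd d i) =
      Fintype.orderIsoFinOfCardEq _ (card_compl_range_orderEmb f) i := by
  simp [shuffleOfOrderEmb]

lemma shuffleOfOrderEmb_mem_shuffles (f : Fin d ↪o Fin (d + e)) :
    shuffleOfOrderEmb f ∈ shuffles d e := by
  refine mem_shuffles.2 ⟨fun i j h => by simpa using h, fun i j h => ?_⟩
  simp only [comp_apply, shuffleOfOrderEmb_natAdd]
  exact Subtype.strictMono_coe _ (OrderIso.strictMono _ h)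

noncomputable def shufflesEquivOrderEmb : shuffles d e ≃ (Fin d ↪o Fin (d + e)) where
  toFun σ := OrderEmbedding.ofStrictMono _ (mem_shuffles.1 σ.2).1
  invFun f := ⟨shuffleOfOrderEmb f, shuffleOfOrderEmb_mem_shuffles f⟩
  left_inv σ := Subtype.ext <|
    eq_of_mem_shuffles_of_comp_castAdd_eq (shuffleOfOrderEmb_mem_shuffles _) σ.2 <| by
      ext i; simp
  right_inv f := by ext i; simp

lemma card_shuffles (d e : ℕ) : (shuffles d e).card = (d + e).choose d := by
  rw [← Nat.card_eq_finsetCard, Nat.card_congr shufflesEquivOrderEmb,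
    Nat.card_congr powersetCard.ofFinEmbEquiv, powersetCard.card, Nat.card_fin]

end Shuffles

section wedgeMul

variable {d e : ℕ} {R : Type*} [CommRing R] {M : Type*} [AddCommGroup M] [Module R M]

@[simp] lemma wedgeMul_tmul (a : ⋀[R]^d M) (b : ⋀[R]^e M) :
    wedgeMul R M d e (a ⊗ₜ[R] b) = (a : ExteriorAlgebra R M) * (b : ExteriorAlgebra R M) := by
  simp [wedgeMul]

lemma wedgeMul_sign_smul_tmul_ιMulti_comp (v : Fin (d + e) → M) (σ : Perm (Fin (d + e))) :
    wedgeMul R M d e ((Perm.sign σ : ℤ) •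
      ((⟨ExteriorAlgebra.ιMulti R d (fun i => v (σ (Fin.castAdd e i))),
          ExteriorAlgebra.ιMulti_range R d (mem_range_self _)⟩ : ⋀[R]^d M) ⊗ₜ[R]
       (⟨ExteriorAlgebra.ιMulti R e (fun i => v (σ (Fin.natAdd d i))),
          ExteriorAlgebra.ιMulti_range R e (mem_range_self _)⟩ : ⋀[R]^e M))) =
      ExteriorAlgebra.ιMulti R (d + e) v := by
  have happend : Fin.append (fun i => v (σ (Fin.castAdd e i))) (fun i => v (σ (Fin.natAdd d i))) =
      v ∘ σ :=
    Fin.append_castAdd_natAdd (f := v ∘ σ)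
  rw [map_zsmul, wedgeMul_tmul, ExteriorAlgebra.ιMulti_mul_ιMulti, happend,
    AlternatingMap.map_perm, Units.smul_def, smul_smul, ← Units.val_mul, Int.units_mul_self,
    Units.val_one, one_smul]

end wedgeMul

/-- Let `R` be a commutative ring, `M` an `R`-module, `d, e ≥ 0`.  The
composite of the comultiplication `Λ^{d+e}(M) → Λ^d(M) ⊗ Λ^e(M)` (the signed sum over
`(d,e)`-shuffles) with the wedge multiplication `Λ^d(M) ⊗ Λ^e(M) → Λ^{d+e}(M)` equals
`(d+e choose d)` times the identity of `Λ^{d+e}(M)`. -/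
theorem extPow_mul_comp_comul {R : Type*} [CommRing R] {M : Type*} [AddCommGroup M]
    [Module R M] (d e : ℕ)
    (comul : (⋀[R]^(d + e) M) →ₗ[R] (⋀[R]^d M) ⊗[R] (⋀[R]^e M))
    (hcomul : ∀ v : Fin (d + e) → M,
      comul ⟨ExteriorAlgebra.ιMulti R (d + e) v,
          ExteriorAlgebra.ιMulti_range R (d + e) (Set.mem_range_self v)⟩ =
        ∑ σ ∈ Finset.univ.filter (fun σ : Equiv.Perm (Fin (d + e)) =>
            (∀ i j : Fin d, i < j → σ (Fin.castAdd e i) < σ (Fin.castAdd e j)) ∧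
            (∀ i j : Fin e, i < j → σ (Fin.natAdd d i) < σ (Fin.natAdd d j))),
          ((Equiv.Perm.sign σ : ℤ) •
            ((⟨ExteriorAlgebra.ιMulti R d (fun i => v (σ (Fin.castAdd e i))),
                ExteriorAlgebra.ιMulti_range R d (Set.mem_range_self _)⟩ : ⋀[R]^d M) ⊗ₜ[R]
             (⟨ExteriorAlgebra.ιMulti R e (fun i => v (σ (Fin.natAdd d i))),
                ExteriorAlgebra.ιMulti_range R e (Set.mem_range_self _)⟩ : ⋀[R]^e M)))) :
    ∀ x : ⋀[R]^(d + e) M,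
      wedgeMul R M d e (comul x) = ((d + e).choose d) • (x : ExteriorAlgebra R M) := by
  have hcomp : wedgeMul R M d e ∘ₗ comul = (d + e).choose d • (⋀[R]^(d + e) M).subtype := by
    ext v
    change wedgeMul R M d e (comul ⟨_, _⟩) = (d + e).choose d • ExteriorAlgebra.ιMulti R (d + e) v
    rw [hcomul, map_sum]
    simp only [wedgeMul_sign_smul_tmul_ιMulti_comp, Finset.sum_const]
    rw [← shuffles, card_shuffles]
  exact fun x => LinearMap.congr_fun hcomp x
end

section
/- Let R be a commutative ring and V, W finitely generated projective (or free) R-modules. For every d ≥ 0, the canonical map Γ^d(Hom_R(V,W)) → Hom_R(V^{⊗d}, W^{⊗d})^{Σ_d}, induced by the isomorphism Hom_R(V,W)^{⊗d} ≅ Hom_R(V^{⊗d}, W^{⊗d}), is an isomorphism of R-modules. In other words, Σ_d-equivariant maps V^{⊗d} → W^{⊗d} are classified by the d-th divided power of Hom_R(V,W). -/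
/-!
Splitting off the last tensor factor, the map `Hom(V,W)^{⊗(d+1)} → Hom(V^{⊗(d+1)}, W^{⊗(d+1)})`
factors as the map for `d`, tensored with `Hom(V,W)`, followed by the canonical
`Hom(V^{⊗d}, W^{⊗d}) ⊗ Hom(V,W) → Hom(V^{⊗d} ⊗ V, W^{⊗d} ⊗ W)`, an isomorphism because `V` and
`V^{⊗d}` are finite projective; so the map is bijective by induction on `d`. It intertwines
permuting the factors of `Hom(V,W)^{⊗d}` with conjugating by the permutation, so a tensor is
symmetric exactly when its image is `Σ_d`-equivariant.
-/
open PiTensorProduct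
open scoped TensorProduct

/-- The `n`-th divided power `Γ^n(M) = (M^{⊗n})^{Σ_n}`: the submodule of symmetric tensors. -/
noncomputable def DivPow (R : Type*) [CommRing R] (M : Type*) [AddCommGroup M] [Module R M]
    (n : ℕ) : Submodule R (⨂[R] (_ : Fin n), M) :=
  ⨅ σ : Equiv.Perm (Fin n),
    LinearMap.ker ((PiTensorProduct.reindex R (fun _ => M) σ).toLinearMap - LinearMap.id)

lemma mem_divPow_iff {R M : Type*} [CommRing R] [AddCommGroup M] [Module R M] {n : ℕ}
    {x : ⨂[R] (_ : Fin n), M} :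
    x ∈ DivPow R M n ↔ ∀ σ : Equiv.Perm (Fin n), reindex R (fun _ => M) σ x = x := by
  simp [DivPow, sub_eq_zero]

namespace PiTensorProduct

section Families

variable {R ι ι₂ : Type*} [CommSemiring R] {s t : ι → Type*}
  [∀ i, AddCommMonoid (s i)] [∀ i, Module R (s i)]
  [∀ i, AddCommMonoid (t i)] [∀ i, Module R (t i)]

lemma piTensorHomMap_reindex (e : ι ≃ ι₂) (x : ⨂[R] i, s i →ₗ[R] t i) :
    piTensorHomMap (reindex R (fun i => s i →ₗ[R] t i) e x) ∘ₗ (reindex R s e).toLinearMap =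
      (reindex R t e).toLinearMap ∘ₗ piTensorHomMap x := by
  induction x using PiTensorProduct.induction_on with
  | smul_tprod r f => ext v; simp
  | add x y hx hy => simp only [map_add, LinearMap.add_comp, LinearMap.comp_add, hx, hy]

-- Both tensor products are `R`, and `piTensorHomMap` becomes `r ↦ r • id`.
lemma piTensorHomMap_bijective_of_isEmpty [IsEmpty ι] :
    Function.Bijective (piTensorHomMap (R := R) (s := s) (t := t)) := by
  let eV : (⨂[R] i, s i) ≃ₗ[R] R := isEmptyEquiv ι
  let eW : (⨂[R] i, t i) ≃ₗ[R] R := isEmptyEquiv ι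
  have h : piTensorHomMap = ((isEmptyEquiv ι).trans ((LinearMap.ringLmapEquivSelf R R R).symm.trans
      (LinearEquiv.arrowCongr eV eW).symm)).toLinearMap := by
    ext f v
    simpa [eV, eW] using congrArg (tprod R) (Subsingleton.elim _ _)
  exact h ▸ LinearEquiv.bijective _

end Families

section TensorPower

variable {R : Type*} [CommRing R] {M N : Type*} [AddCommGroup M] [Module R M]
  [AddCommGroup N] [Module R N]

variable (R M) in
noncomputable def tensorPowSuccEquiv (d : ℕ) :
    (⨂[R] _ : Fin (d + 1), M) ≃ₗ[R] (⨂[R] _ : Fin d, M) ⊗[R] M :=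
  reindex R (fun _ => M) finSumFinEquiv.symm ≪≫ₗ (tmulEquiv R M).symm ≪≫ₗ
    TensorProduct.congr (LinearEquiv.refl R _) (subsingletonEquiv 0)

@[simp]
lemma tensorPowSuccEquiv_tprod (d : ℕ) (v : Fin (d + 1) → M) :
    tensorPowSuccEquiv R M d (tprod R v) =
      (tprod R fun i : Fin d => v (Fin.castSucc i)) ⊗ₜ[R] v (Fin.last d) := by
  simp only [tensorPowSuccEquiv, LinearEquiv.trans_apply, reindex_tprod, Equiv.symm_symm,
    tmulEquiv_symm_apply, finSumFinEquiv_apply_left, finSumFinEquiv_apply_right,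
    TensorProduct.congr_tmul, LinearEquiv.refl_apply, subsingletonEquiv_apply_tprod]
  rfl

instance projective_tensorPow [Module.Projective R M] (d : ℕ) :
    Module.Projective R (⨂[R] _ : Fin d, M) := by
  induction d with
  | zero => exact .of_equiv' (isEmptyEquiv (Fin 0)).symm
  | succ d ih => exact .of_equiv' (tensorPowSuccEquiv R M d).symm

lemma piTensorHomMap_succ (d : ℕ) :
    piTensorHomMap (R := R) (s := fun _ : Fin (d + 1) => M) (t := fun _ => N) =
      (LinearEquiv.arrowCongr (tensorPowSuccEquiv R M d)
          (tensorPowSuccEquiv R N d)).symm.toLinearMap ∘ₗ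
        TensorProduct.homTensorHomMap (.id R) _ M _ N ∘ₗ
          LinearMap.rTensor (M →ₗ[R] N) piTensorHomMap ∘ₗ
            (tensorPowSuccEquiv R (M →ₗ[R] N) d).toLinearMap := by
  ext f v
  apply (tensorPowSuccEquiv R N d).injective
  simp

lemma piTensorHomMap_bijective [Module.Projective R M] [Module.Finite R M] (d : ℕ) :
    Function.Bijective (piTensorHomMap (R := R) (s := fun _ : Fin d => M) (t := fun _ => N)) := by
  induction d with
  | zero => exact piTensorHomMap_bijective_of_isEmpty
  | succ d ih =>
    rw [piTensorHomMap_succ, ← homTensorHomEquiv_toLinearMap]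
    have hHom := (homTensorHomEquiv R (⨂[R] _ : Fin d, M) M (⨂[R] _ : Fin d, N) N).bijective
    have hrTensor := (LinearEquiv.rTensor (M →ₗ[R] N) (LinearEquiv.ofBijective _ ih)).bijective
    simp only [LinearMap.coe_comp, LinearEquiv.coe_coe]
    exact (LinearEquiv.bijective _).comp (hHom.comp (hrTensor.comp (LinearEquiv.bijective _)))

end TensorPower

end PiTensorProduct

theorem divPow_hom_equiv_equivariant_general {R : Type*} [CommRing R] {V W : Type*}
    [AddCommGroup V] [Module R V] [AddCommGroup W] [Module R W]
    [Module.Free R V] [Module.Finite R V] (d : ℕ) :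
    Set.BijOn
      (⇑(PiTensorProduct.piTensorHomMap (R := R) (s := fun _ : Fin d => V)
        (t := fun _ : Fin d => W)))
      (DivPow R (V →ₗ[R] W) d : Set (⨂[R] (_ : Fin d), V →ₗ[R] W))
      {f : (⨂[R] (_ : Fin d), V) →ₗ[R] ⨂[R] (_ : Fin d), W |
        ∀ σ : Equiv.Perm (Fin d),
          f.comp (PiTensorProduct.reindex R (fun _ : Fin d => V) σ).toLinearMap =
            (PiTensorProduct.reindex R (fun _ : Fin d => W) σ).toLinearMap.comp f} := by
  have hφ := piTensorHomMap_bijective (R := R) (M := V) (N := W) d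
  convert hφ.bijOn_preimage using 1
  ext x
  simp only [Set.mem_preimage, Set.mem_ofPred_eq, SetLike.mem_coe, mem_divPow_iff]
  refine forall_congr' fun σ => ?_
  rw [← piTensorHomMap_reindex, LinearEquiv.eq_comp_toLinearMap_iff, hφ.injective.eq_iff,
    eq_comm]

/-- Let `R` be a commutative ring and `V`, `W` finitely generated free
`R`-modules.  For every `d ≥ 0`, the canonical map
`Γ^d(Hom_R(V,W)) → Hom_R(V^{⊗d}, W^{⊗d})^{Σ_d}` induced by
`Hom_R(V,W)^{⊗d} → Hom_R(V^{⊗d}, W^{⊗d})` is a bijection onto the set of `Σ_d`-equivariant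
maps: it maps symmetric tensors to equivariant maps, injectively and surjectively. -/
theorem divPow_hom_equiv_equivariant {R : Type*} [CommRing R] {V W : Type*}
    [AddCommGroup V] [Module R V] [AddCommGroup W] [Module R W]
    [Module.Free R V] [Module.Finite R V] [Module.Free R W] [Module.Finite R W] (d : ℕ) :
    Set.BijOn
      (⇑(PiTensorProduct.piTensorHomMap (R := R) (s := fun _ : Fin d => V)
        (t := fun _ : Fin d => W)))
      (DivPow R (V →ₗ[R] W) d : Set (⨂[R] (_ : Fin d), V →ₗ[R] W))
      {f : (⨂[R] (_ : Fin d), V) →ₗ[R] ⨂[R] (_ : Fin d), W |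
        ∀ σ : Equiv.Perm (Fin d),
          f.comp (PiTensorProduct.reindex R (fun _ : Fin d => V) σ).toLinearMap =
            (PiTensorProduct.reindex R (fun _ : Fin d => W) σ).toLinearMap.comp f} :=
  divPow_hom_equiv_equivariant_general d
end

section
/- Let k be a commutative ring, A a weighted graded k-algebra, and α an integer. Define the regraded algebra R_α A by shifting the degree of each homogeneous element x of weight w(x) to |x| + α·w(x) (keeping weights), with product s^{αw(x)}x · s^{αw(y)}y = (−1)^{α|x|w(y)} s^{αw(x)+αw(y)}(xy). Then R_α A is an associative weighted graded algebra, and: (a) if α is even, R_{−α}(R_α A) = A; (b) if α is odd, R_{−α}(R_α A) = ^t A, the weight-twisted algebra whose product is x·^t y = (−1)^{w(x)w(y)} xy. -/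
/-!
Both `R_α A` and `R_{-α}(R_α A)` are the product of `A` twisted by a sign `ε(p, q)` depending
only on the bidegrees of the factors. A twisted product `a ⋆ b = ε(p, q) • a b` is associative
as soon as `ε` is a 2-cocycle, and `(p, q) ↦ (-1)^{α p.1 q.2}` is even a bicharacter. Composing
the two regradings multiplies the signs, and the exponents add up to `-α² d e`, whose parity is
that of `0` for even `α` and of `d e` for odd `α`.
-/

/-- The sign `(−1)^z` for an integer exponent `z`. -/
def esign (z : ℤ) : ℤ := (((-1 : ℤˣ) ^ z : ℤˣ) : ℤ)

lemma esign_add (a b : ℤ) : esign (a + b) = esign a * esign b := by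
  simp [esign, zpow_add]

lemma esign_even {z : ℤ} (h : Even z) : esign z = 1 := by
  obtain ⟨m, rfl⟩ := h
  simp [esign, zpow_add, Int.units_mul_self]

lemma esign_congr {a b : ℤ} (h : Even (a - b)) : esign a = esign b := by
  rw [show a = b + (a - b) by ring, esign_add, esign_even h, mul_one]

lemma esign_smul_smul {A : Type*} [AddCommGroup A] (s t : ℤ) (x : A) :
    esign s • esign t • x = esign (s + t) • x := by
  rw [smul_smul, ← esign_add]

lemma esign_regrading_cocycle (α : ℤ) (p q r : ℤ × ℕ) :
    esign (α * p.1 * q.2) * esign (α * (p + q).1 * r.2) =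
      esign (α * q.1 * r.2) * esign (α * p.1 * (q + r).2) := by
  rw [← esign_add, ← esign_add]
  congr 1
  push_cast [Prod.fst_add, Prod.snd_add]
  ring

namespace DirectSum.Decomposition

variable {ι R M N : Type*} [DecidableEq ι] [CommRing R] [AddCommGroup M] [Module R M]
  [AddCommGroup N] [Module R N] (ℳ : ι → Submodule R M) [Decomposition ℳ]

theorem linearMap_ext_of_homogeneous {f g : M →ₗ[R] N}
    (h : ∀ i, ∀ a ∈ ℳ i, f a = g a) : f = g :=
  decompose_lhom_ext ℳ fun i => LinearMap.ext fun a => h i a a.2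

theorem bilinear_ext_of_homogeneous {f g : M →ₗ[R] M →ₗ[R] N}
    (h : ∀ i j, ∀ a ∈ ℳ i, ∀ b ∈ ℳ j, f a b = g a b) : f = g :=
  linearMap_ext_of_homogeneous ℳ fun i a ha =>
    linearMap_ext_of_homogeneous ℳ fun j b hb => h i j a ha b hb

end DirectSum.Decomposition

section TwistedProduct

open DirectSum.Decomposition

variable {ι k A : Type*} [DecidableEq ι] [AddMonoid ι] [CommRing k] [Ring A] [Algebra k A]
  (𝒜 : ι → Submodule k A) [GradedAlgebra 𝒜] (ε : ι → ι → ℤ) (μ : A →ₗ[k] A →ₗ[k] A)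

theorem twisted_mul_mem_graded
    (hμ : ∀ p q, ∀ a ∈ 𝒜 p, ∀ b ∈ 𝒜 q, μ a b = ε p q • (a * b))
    {p q : ι} {a b : A} (ha : a ∈ 𝒜 p) (hb : b ∈ 𝒜 q) : μ a b ∈ 𝒜 (p + q) := by
  rw [hμ p q a ha b hb]
  exact zsmul_mem (SetLike.mul_mem_graded ha hb) _

theorem twisted_mul_assoc
    (hε : ∀ p q r, ε p q * ε (p + q) r = ε q r * ε p (q + r))
    (hμ : ∀ p q, ∀ a ∈ 𝒜 p, ∀ b ∈ 𝒜 q, μ a b = ε p q • (a * b))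
    (x y z : A) : μ (μ x y) z = μ x (μ y z) := by
  have homogeneous : ∀ p q, ∀ a ∈ 𝒜 p, ∀ b ∈ 𝒜 q, μ (μ a b) = μ a ∘ₗ μ b := by
    intro p q a ha b hb
    refine linearMap_ext_of_homogeneous 𝒜 fun r c hc => ?_
    rw [LinearMap.comp_apply, hμ _ _ _ (twisted_mul_mem_graded 𝒜 ε μ hμ ha hb) c hc,
      hμ q r b hb c hc, map_zsmul, hμ _ _ a ha _ (SetLike.mul_mem_graded hb hc), hμ p q a ha b hb,
      smul_mul_assoc, smul_smul, smul_smul, mul_assoc, mul_comm (ε _ r), hε]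
  have : μ.compr₂ (μ.flip z) = μ.compl₂ (μ.flip z) :=
    bilinear_ext_of_homogeneous 𝒜 fun p q a ha b hb =>
      congr($(homogeneous p q a ha b hb) z)
  exact congr($this x y)

end TwistedProduct

/-- Let `A` be a weighted graded `k`-algebra (degree in `ℤ`, weight in `ℕ`)
and `α : ℤ`.  The regraded algebra `R_α A` has the same underlying module, each homogeneous
element of degree `i` and weight `d` placed in degree `i + α·d`, and product
`x ·_α y = (−1)^{α·|x|·w(y)} x·y` on homogeneous elements.  Then `R_α A` is an associative
weighted graded algebra, and: (a) if `α` is even, `R_{−α}(R_α A) = A`; (b) if `α` is odd,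
`R_{−α}(R_α A) = ^tA`, the weight-twisted algebra with product `x ·^t y = (−1)^{w(x)w(y)} xy`.
Here `mulα` is the product of `R_α A` and `P` is the product of `R_{−α}(R_α A)`, both
specified on homogeneous elements. -/
theorem regrading_assoc_and_involutive {k A : Type*} [CommRing k] [Ring A] [Algebra k A]
    (𝒜 : ℤ × ℕ → Submodule k A) [GradedAlgebra 𝒜] (α : ℤ)
    (mulα : A →ₗ[k] A →ₗ[k] A)
    (hmulα : ∀ (i j : ℤ) (d e : ℕ), ∀ a ∈ 𝒜 (i, d), ∀ a' ∈ 𝒜 (j, e),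
      mulα a a' = esign (α * i * (e : ℤ)) • (a * a'))
    (P : A →ₗ[k] A →ₗ[k] A)
    (hP : ∀ (i j : ℤ) (d e : ℕ), ∀ a ∈ 𝒜 (i, d), ∀ a' ∈ 𝒜 (j, e),
      P a a' = esign ((-α) * (i + α * (d : ℤ)) * (e : ℤ)) • mulα a a') :
    (∀ x y z : A, mulα (mulα x y) z = mulα x (mulα y z)) ∧
    (∀ (i j : ℤ) (d e : ℕ), ∀ a ∈ 𝒜 (i, d), ∀ a' ∈ 𝒜 (j, e),
      mulα a a' ∈ 𝒜 (i + j, d + e)) ∧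
    (Even α → ∀ x y : A, P x y = x * y) ∧
    (Odd α → ∀ (i j : ℤ) (d e : ℕ), ∀ a ∈ 𝒜 (i, d), ∀ a' ∈ 𝒜 (j, e),
      P a a' = esign ((d * e : ℕ) : ℤ) • (a * a')) := by
  have hμ : ∀ p q, ∀ a ∈ 𝒜 p, ∀ b ∈ 𝒜 q, mulα a b = esign (α * p.1 * q.2) • (a * b) :=
    fun p q => hmulα p.1 q.1 p.2 q.2
  have hPμ : ∀ (i j : ℤ) (d e : ℕ), ∀ a ∈ 𝒜 (i, d), ∀ b ∈ 𝒜 (j, e),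
      P a b = esign (-(α * α) * d * e) • (a * b) := by
    intro i j d e a ha b hb
    rw [hP i j d e a ha b hb, hmulα i j d e a ha b hb, esign_smul_smul]
    congr 2
    ring
  refine ⟨twisted_mul_assoc 𝒜 _ mulα (esign_regrading_cocycle α) hμ,
    fun i j d e a ha b hb => twisted_mul_mem_graded 𝒜 _ mulα hμ ha hb, fun hα x y => ?_,
    fun hα i j d e a ha b hb => ?_⟩
  · have hPmul : P = LinearMap.mul k A :=
      DirectSum.Decomposition.bilinear_ext_of_homogeneous 𝒜 fun p q a ha b hb => by
        rw [hPμ p.1 q.1 p.2 q.2 a ha b hb, esign_even (by simp [hα, Int.even_mul]), one_smul,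
          LinearMap.mul_apply']
    rw [hPmul, LinearMap.mul_apply']
  · rw [hPμ i j d e a ha b hb]
    congr 1
    apply esign_congr
    obtain ⟨m, rfl⟩ := hα
    exact ⟨-((2 * m * m + 2 * m + 1) * d * e), by push_cast; ring⟩
end
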